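/- arXiv:2412.09767 — 5 statements merged into one kernel-verified Lean document; each statement's English description precedes it below -/
import Mathlib

section
/- Let (X,d) be a complete metric space and (f_n) a sequence of self-maps of X such that μ := sup_n Lip(f_n) < 1. Suppose there exists x_0 ∈ X such that the sequence (d(f_n(x_0), x_0)) is bounded. Then there exists x* ∈ X such that for every x ∈ X, the sequence f_1 ∘ f_2 ∘ ⋯ ∘ f_n(x) converges to x* as n → ∞. -/
/-!
The composition `f₁ ∘ ⋯ ∘ fₙ` is `μⁿ`-Lipschitz. Since `fₙ₊₁` moves `x₀` by at most `M`,
consecutive terms of the orbit of `x₀` are at distance at most `M μⁿ`, so the orbit is Cauchy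
and converges to some `x*`; the orbit of any other `x` stays within `μⁿ d(x, x₀)` of it.
-/

open Filter
open scoped NNReal

/-- `seqComp f k m x = f k (f (k+1) (⋯ (f (k+m-1) x)))`: the composition of the
`m` maps `f k, …, f (k+m-1)`, applying the one with largest index first. -/
def seqComp {X : Type*} (f : ℕ → X → X) : ℕ → ℕ → X → X
  | _, 0, x => x
  | k, m + 1, x => f k (seqComp f (k + 1) m x)

section

variable {X : Type*} (f : ℕ → X → X)

theorem seqComp_succ_right (k m : ℕ) (x : X) :
    seqComp f k (m + 1) x = seqComp f k m (f (k + m) x) := by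
  induction m generalizing k with
  | zero => rfl
  | succ m ih =>
    change f k (seqComp f (k + 1) (m + 1) x) = f k (seqComp f (k + 1) m (f (k + m + 1) x))
    rw [ih (k + 1), Nat.add_right_comm]

variable [PseudoMetricSpace X] {f} {μ : ℝ≥0}

theorem lipschitzWith_seqComp (hf : ∀ n, LipschitzWith μ (f n)) (k m : ℕ) :
    LipschitzWith (μ ^ m) (seqComp f k m) := by
  induction m generalizing k with
  | zero => exact LipschitzWith.id
  | succ m ih => rw [pow_succ']; exact (hf k).comp (ih (k + 1))

theorem dist_seqComp_le_pow_mul (hf : ∀ n, LipschitzWith μ (f n)) (k m : ℕ) (x y : X) :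
    dist (seqComp f k m x) (seqComp f k m y) ≤ μ ^ m * dist x y := by
  exact_mod_cast (lipschitzWith_seqComp hf k m).dist_le_mul x y

theorem dist_seqComp_succ_le (hf : ∀ n, LipschitzWith μ (f n)) {x₀ : X} {M : ℝ}
    (hM : ∀ n, dist (f n x₀) x₀ ≤ M) (k m : ℕ) :
    dist (seqComp f k m x₀) (seqComp f k (m + 1) x₀) ≤ M * μ ^ m :=
  calc dist (seqComp f k m x₀) (seqComp f k (m + 1) x₀)
      = dist (seqComp f k m (f (k + m) x₀)) (seqComp f k m x₀) := by
        rw [seqComp_succ_right, dist_comm]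
    _ ≤ μ ^ m * dist (f (k + m) x₀) x₀ := dist_seqComp_le_pow_mul hf k m _ _
    _ ≤ μ ^ m * M := by gcongr; exact hM _
    _ = M * μ ^ m := mul_comm _ _

theorem cauchySeq_seqComp (hμ : μ < 1) (hf : ∀ n, LipschitzWith μ (f n)) {x₀ : X} {M : ℝ}
    (hM : ∀ n, dist (f n x₀) x₀ ≤ M) (k : ℕ) :
    CauchySeq fun m => seqComp f k m x₀ :=
  cauchySeq_of_le_geometric (μ : ℝ) M (mod_cast hμ) (dist_seqComp_succ_le hf hM k)

theorem tendsto_dist_seqComp_zero (hμ : μ < 1) (hf : ∀ n, LipschitzWith μ (f n)) (k : ℕ)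
    (x y : X) :
    Tendsto (fun m => dist (seqComp f k m x) (seqComp f k m y)) atTop (nhds 0) := by
  have hpow : Tendsto (fun m : ℕ => (μ : ℝ) ^ m * dist x y) atTop (nhds 0) := by
    simpa using (tendsto_pow_atTop_nhds_zero_of_lt_one μ.coe_nonneg (mod_cast hμ)).mul_const
      (dist x y)
  exact squeeze_zero (fun _ => dist_nonneg) (fun m => dist_seqComp_le_pow_mul hf k m x y) hpow

end

/-- Non-stationary contraction mapping principle. -/
theorem nonstationary_contraction {X : Type*} [MetricSpace X] [CompleteSpace X]
    (f : ℕ → X → X) (μ : ℝ≥0) (hμ : μ < 1) (hf : ∀ n, LipschitzWith μ (f n))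
    (x₀ : X) (hb : ∃ M : ℝ, ∀ n, dist (f n x₀) x₀ ≤ M) :
    ∃ xs : X, ∀ x : X,
      Tendsto (fun n => seqComp f 1 n x) atTop (nhds xs) := by
  obtain ⟨M, hM⟩ := hb
  obtain ⟨xs, hxs⟩ := cauchySeq_tendsto_of_complete (cauchySeq_seqComp hμ hf hM 1)
  exact ⟨xs, fun x => hxs.congr_dist (tendsto_dist_seqComp_zero hμ hf 1 x₀ x)⟩
end

section
/- Define f_n : ℝ → ℝ by f_n(x) = (1/2)x + 3^n. Then each f_n is a contraction with Lipschitz constant 1/2, but f_1 ∘ f_2 ∘ ⋯ ∘ f_n(0) = Σ_{i=1}^n 3^i/2^{i-1} → ∞ as n → ∞; hence the sequence (f_1∘⋯∘f_n(0)) does not converge. -/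
/-!
Composing affine maps `x ↦ a * x + b n` gives `a ^ m * x + ∑ a ^ i * b (k + i)`. With `a = 1/2` and
`b n = 3 ^ n` every term `3 ^ (i + 1) / 2 ^ i` is at least `3`, so the orbit of `0` grows at least
linearly, although each map is a `1/2`-contraction.
-/

open Filter
open scoped NNReal

theorem seqComp_eq_of_affine {R : Type*} [CommSemiring R] {f : ℕ → R → R} (a : R) (b : ℕ → R)
    (hf : ∀ n x, f n x = a * x + b n) (k m : ℕ) (x : R) :
    seqComp f k m x = a ^ m * x + ∑ i ∈ Finset.range m, a ^ i * b (k + i) := by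
  induction m generalizing k with
  | zero => simp [seqComp]
  | succ m ih =>
    rw [seqComp, hf, ih, Finset.sum_range_succ', mul_add, Finset.mul_sum]
    simp only [add_right_comm k 1, ← add_assoc, pow_succ', mul_assoc, pow_zero, one_mul, add_zero]

theorem lipschitzWith_mul_add (a c : ℝ) : LipschitzWith ‖a‖₊ fun x => a * x + c :=
  LipschitzWith.of_dist_le_mul fun x y => by
    simp [Real.dist_eq, ← mul_sub, abs_mul]

theorem tendsto_sum_range_atTop_of_le {f : ℕ → ℝ} {c : ℝ} (hc : 0 < c) (hf : ∀ i, c ≤ f i) :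
    Tendsto (fun n => ∑ i ∈ Finset.range n, f i) atTop atTop := by
  refine tendsto_atTop_mono (fun n => ?_) (tendsto_natCast_atTop_atTop.atTop_mul_const hc)
  simpa using Finset.card_nsmul_le_sum (Finset.range n) f c fun i _ => hf i

/-- The boundedness hypothesis in the non-stationary contraction principle
cannot be removed: `f n x = x/2 + 3^n` consists of `1/2`-contractions but
the orbit of `0` diverges. -/
theorem contraction_boundedness_needed :
    ∀ f : ℕ → ℝ → ℝ, (∀ n x, f n x = x / 2 + 3 ^ n) →
      (∀ n, LipschitzWith (1 / 2) (f n)) ∧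
      (∀ n : ℕ, seqComp f 1 n 0 = ∑ i ∈ Finset.range n, 3 ^ (i + 1) / 2 ^ i) ∧
      Tendsto (fun n => seqComp f 1 n 0) atTop atTop ∧
      ¬ ∃ L : ℝ, Tendsto (fun n => seqComp f 1 n 0) atTop (nhds L) := by
  intro f hf
  have hf_affine : ∀ n x, f n x = 2⁻¹ * x + 3 ^ n := fun n x => by rw [hf, div_eq_inv_mul]
  have hsum : ∀ n : ℕ, seqComp f 1 n 0 = ∑ i ∈ Finset.range n, 3 ^ (i + 1) / 2 ^ i := fun n => by
    rw [seqComp_eq_of_affine _ _ hf_affine, mul_zero, zero_add]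
    refine Finset.sum_congr rfl fun i _ => ?_
    rw [inv_pow, add_comm 1 i]
    ring
  have hterm : ∀ i : ℕ, (3 : ℝ) ≤ 3 ^ (i + 1) / 2 ^ i := fun i => by
    rw [le_div_iff₀ (by positivity), pow_succ']
    gcongr
    norm_num
  have htop : Tendsto (fun n => seqComp f 1 n 0) atTop atTop := by
    simpa only [hsum] using tendsto_sum_range_atTop_of_le three_pos hterm
  refine ⟨fun n => ?_, hsum, htop, fun ⟨L, hL⟩ => not_tendsto_nhds_of_tendsto_atTop htop L hL⟩
  convert lipschitzWith_mul_add 2⁻¹ (3 ^ n) using 1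
  · ext
    simp
  · exact funext (hf_affine n)
end

section
/- Let X = Y = ℝ, f_n(x) = x/2, and h_n^x(y) = y/2 + 3^n for all x, n. Define F_n(x,y) = (f_n(x), h_n^x(y)). Then all Lipschitz constants equal 1/2 and f_n(0) = 0 is bounded, but the Y-coordinate of F_1∘⋯∘F_n(0,0) equals Σ_{i=1}^n 3^i/2^{i-1}, which tends to ∞; hence (F_1∘⋯∘F_n(0,0)) does not converge. -/
/-!
Both coordinates are affine with contraction factor `1/2`, and the fiber maps do not depend on
the base point, so the second coordinate of the orbit is the orbit of `y ↦ y/2 + 3^n` alone: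
`∑_{i<n} 3^(1+i)/2^i`. Each term is at least `1`, so it tends to infinity.
-/

open Filter
open scoped NNReal

theorem seqComp_prodMap {X Y : Type*} (f : ℕ → X → X) (g : ℕ → Y → Y) (k m : ℕ) (p : X × Y) :
    seqComp (fun n => Prod.map (f n) (g n)) k m p = (seqComp f k m p.1, seqComp g k m p.2) := by
  induction m generalizing k with
  | zero => rfl
  | succ m ih => simp only [seqComp, ih, Prod.map_apply]

theorem seqComp_affine_zero {R : Type*} [CommSemiring R] (a : R) (c : ℕ → R) (k m : ℕ) :
    seqComp (fun n y => a * y + c n) k m 0 = ∑ i ∈ Finset.range m, a ^ i * c (k + i) := by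
  induction m generalizing k with
  | zero => simp [seqComp]
  | succ m ih =>
    rw [seqComp, ih, Finset.sum_range_succ', Finset.mul_sum, pow_zero, one_mul, add_zero]
    congr 1
    refine Finset.sum_congr rfl fun i _ => ?_
    rw [add_assoc, add_comm 1 i]
    ring

theorem lipschitzWith_div_two_add_const (c : ℝ) : LipschitzWith (1 / 2) (fun y : ℝ => y / 2 + c) :=
  LipschitzWith.of_dist_le_mul fun x y => by
    rw [Real.dist_eq, Real.dist_eq, show x / 2 + c - (y / 2 + c) = (x - y) / 2 by ring, abs_div,
      abs_two]
    norm_num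
    linarith

theorem tendsto_sum_range_atTop_of_one_le {u : ℕ → ℝ} (hu : ∀ i, 1 ≤ u i) :
    Tendsto (fun n => ∑ i ∈ Finset.range n, u i) atTop atTop :=
  tendsto_atTop_mono
    (fun n => by simpa using Finset.card_nsmul_le_sum (Finset.range n) u 1 fun i _ => hu i)
    tendsto_natCast_atTop_atTop

/-- The fiber boundedness condition cannot be removed from the non-stationary
fiber contraction theorem: with `f n x = x/2`, `h n x y = y/2 + 3^n`, all the
maps are `1/2`-contractions and the base orbit of `0` is bounded, but the
skew orbit of `(0,0)` diverges. -/
theorem fiber_boundedness_needed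
    (f : ℕ → ℝ → ℝ) (hf : ∀ n x, f n x = x / 2)
    (h : ℕ → ℝ → ℝ → ℝ) (hh : ∀ n x y, h n x y = y / 2 + 3 ^ n)
    (F : ℕ → ℝ × ℝ → ℝ × ℝ) (hF : ∀ n p, F n p = (f n p.1, h n p.1 p.2)) :
    (∀ n, LipschitzWith (1 / 2) (f n)) ∧
    (∀ n x, LipschitzWith (1 / 2) (h n x)) ∧
    (∀ n, f n 0 = 0) ∧
    (∀ n : ℕ, (seqComp F 1 n (0, 0)).2 = ∑ i ∈ Finset.range n, 3 ^ (i + 1) / 2 ^ i) ∧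
    Tendsto (fun n => (seqComp F 1 n (0, 0)).2) atTop atTop ∧
    ¬ ∃ z : ℝ × ℝ, Tendsto (fun n => seqComp F 1 n (0, 0)) atTop (nhds z) := by
  have hF' : F = fun n => Prod.map (f n) (fun y => 2⁻¹ * y + 3 ^ n) := by
    funext n p
    simp only [hF, hh, Prod.map, div_eq_inv_mul]
  have hsum : ∀ n : ℕ, (seqComp F 1 n (0, 0)).2 = ∑ i ∈ Finset.range n, 3 ^ (i + 1) / 2 ^ i := by
    intro n
    rw [hF', seqComp_prodMap, seqComp_affine_zero]
    dsimp only
    refine Finset.sum_congr rfl fun i _ => ?_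
    rw [add_comm 1 i, div_eq_mul_inv, ← inv_pow]
    ring
  have htend : Tendsto (fun n => (seqComp F 1 n (0, 0)).2) atTop atTop := by
    simp only [hsum]
    refine tendsto_sum_range_atTop_of_one_le fun i => (one_le_div₀ (by positivity)).2 ?_
    calc (2 : ℝ) ^ i ≤ 3 ^ i := pow_le_pow_left₀ (by norm_num) (by norm_num) i
      _ ≤ 3 ^ (i + 1) := pow_le_pow_right₀ (by norm_num) i.le_succ
  refine ⟨fun n => ?_, fun n x => ?_, fun n => by simp [hf], hsum, htend, ?_⟩
  · simpa [funext (hf n)] using lipschitzWith_div_two_add_const 0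
  · simpa only [funext (hh n x)] using lipschitzWith_div_two_add_const (3 ^ n)
  · rintro ⟨z, hz⟩
    exact not_tendsto_nhds_of_tendsto_atTop htend z.2 ((continuous_snd.tendsto z).comp hz)
end

section
/- Let X = Y = ℝ, f_n(x) = x/2 for all n, and h_n^x(y) = 0 if x = 0 and h_n^x(y) = (1/2)(y - 1/4) + 1/4 if x ≠ 0. Define F_n(x,y) = (f_n(x), h_n^x(y)). Then for every y ∈ ℝ: F_1∘⋯∘F_n(0,y) → (0,0) as n → ∞, while for every x ≠ 0, F_1∘⋯∘F_n(x,y) → (0, 1/4) as n → ∞. In particular the limit of F_1∘⋯∘F_n(x,y) depends on the initial point. -/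
/-! All the `F n` are one map `fiberMap`. It sends the line `x = 0` in one step to its fixed point
`(0, 0)`, while on `x ≠ 0`, which it preserves, it is the affine contraction
`(x, y) ↦ (x / 2, (y - 1/4) / 2 + 1/4)` towards `(0, 1/4)`. -/

open Filter
open scoped NNReal

theorem seqComp_const {X : Type*} (g : X → X) (k m : ℕ) :
    seqComp (fun _ => g) k m = g^[m] := by
  induction m generalizing k with
  | zero => rfl
  | succ m ih =>
    funext x
    rw [Function.iterate_succ_apply', ← ih (k + 1)]
    rfl

theorem tendsto_div_two_pow (c : ℝ) : Tendsto (fun n : ℕ => c / 2 ^ n) atTop (nhds 0) :=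
  (tendsto_pow_atTop_atTop_of_one_lt one_lt_two).const_div_atTop c

noncomputable def fiberMap (p : ℝ × ℝ) : ℝ × ℝ :=
  (p.1 / 2, if p.1 = 0 then 0 else (p.2 - 1 / 4) / 2 + 1 / 4)

theorem fiberMap_zero_fst (y : ℝ) : fiberMap (0, y) = (0, 0) := by
  simp [fiberMap]

theorem fiberMap_iterate_succ_zero_fst (y : ℝ) (n : ℕ) :
    fiberMap^[n + 1] (0, y) = (0, 0) := by
  rw [Function.iterate_succ_apply, fiberMap_zero_fst]
  exact Function.iterate_fixed (fiberMap_zero_fst 0) n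

theorem fiberMap_iterate_of_ne_zero {x : ℝ} (hx : x ≠ 0) (y : ℝ) (n : ℕ) :
    fiberMap^[n] (x, y) = (x / 2 ^ n, (y - 1 / 4) / 2 ^ n + 1 / 4) := by
  induction n with
  | zero => simp
  | succ n ih =>
    have hxn : x / 2 ^ n ≠ 0 := by positivity
    rw [Function.iterate_succ_apply', ih, fiberMap]
    simp only [hxn, if_false, Prod.mk.injEq]
    constructor <;> ring

/-- The equicontinuity condition (3) cannot be removed from the non-stationary
fiber contraction theorem: the limit may depend on the initial point. -/
theorem fiber_equicontinuity_needed
    (f : ℕ → ℝ → ℝ) (hf : ∀ n x, f n x = x / 2)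
    (h : ℕ → ℝ → ℝ → ℝ)
    (hh : ∀ n x y, h n x y = if x = 0 then 0 else (y - 1 / 4) / 2 + 1 / 4)
    (F : ℕ → ℝ × ℝ → ℝ × ℝ) (hF : ∀ n p, F n p = (f n p.1, h n p.1 p.2)) :
    (∀ y : ℝ, Tendsto (fun n => seqComp F 1 n (0, y)) atTop (nhds ((0 : ℝ), (0 : ℝ)))) ∧
    ∀ x : ℝ, x ≠ 0 → ∀ y : ℝ,
      Tendsto (fun n => seqComp F 1 n (x, y)) atTop (nhds ((0 : ℝ), (1 / 4 : ℝ))) := by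
  have hF_const : F = fun _ => fiberMap := by
    funext n p
    rw [hF, hf, hh, fiberMap]
  subst hF_const
  simp only [seqComp_const]
  refine ⟨fun y => ?_, fun x hx y => ?_⟩
  · rw [← tendsto_add_atTop_iff_nat 1]
    simp only [fiberMap_iterate_succ_zero_fst]
    exact tendsto_const_nhds
  · simp only [fiberMap_iterate_of_ne_zero hx]
    refine (tendsto_div_two_pow x).prodMk_nhds ?_
    simpa only [zero_add] using (tendsto_div_two_pow (y - 1 / 4)).add_const (1 / 4)
end

section
/- Let X be a topological space, Y a complete metric space, f : X → X continuous, and {g_x}_{x∈X} a family of maps g_x : Y → Y such that F(x,y) := (f(x), g_x(y)) is continuous on X × Y. Suppose p ∈ X is a fixed point of f with f^n(x) → p for all x ∈ X, q ∈ Y is a fixed point of g_p, and limsup_{n→∞} Lip(g_{f^n(x)}) < 1 for all x ∈ X. Then (p,q) is a fixed point of F and F^n(x,y) → (p,q) for all (x,y) ∈ X × Y. -/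
/-!
Along an orbit, the base points `fⁿ(x)` converge to `p`, so the fibre maps `g_{fⁿ(x)}` move `q`
less and less, while eventually contracting by a uniform factor `c < 1`. Hence `aₙ = d(yₙ, q)`
satisfies `aₙ₊₁ ≤ c aₙ + εₙ` with `εₙ → 0`, which forces `aₙ → 0`.
-/

open Filter Topology
open scoped NNReal

theorem tendsto_zero_of_le_mul_add {a e : ℕ → ℝ} {c : ℝ} (hc0 : 0 ≤ c) (hc1 : c < 1)
    (ha : ∀ n, 0 ≤ a n) (he : Tendsto e atTop (𝓝 0))
    (hrec : ∀ᶠ n in atTop, a (n + 1) ≤ c * a n + e n) :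
    Tendsto a atTop (𝓝 0) := by
  refine tendsto_order.2 ⟨fun b hb => .of_forall fun n => hb.trans_le (ha n), fun ε hε => ?_⟩
  have hδ : 0 < (1 - c) * (ε / 2) := by nlinarith
  obtain ⟨M, hM⟩ := eventually_atTop.1 ((he.eventually (eventually_le_nhds hδ)).and hrec)
  -- With `δ = ε / 2`: once `eₙ ≤ (1 - c) δ`, we get `aₙ₊₁ - δ ≤ c (aₙ - δ)`.
  have hgeom : ∀ k, a (k + M) - ε / 2 ≤ c ^ k * (a M - ε / 2) := fun k => by
    simpa only [zero_add] using le_geom (u := fun k => a (k + M) - ε / 2) hc0 k fun i _ => by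
      obtain ⟨hei, hreci⟩ := hM (i + M) (by omega)
      simp only [Nat.add_right_comm i 1 M]
      nlinarith
  have hsmall : ∀ᶠ k in atTop, c ^ k * (a M - ε / 2) < ε / 2 :=
    ((tendsto_pow_atTop_nhds_zero_of_lt_one hc0 hc1).mul_const _).eventually
      (eventually_lt_nhds (by simpa using half_pos hε))
  rw [← map_add_atTop_eq_nat M]
  exact eventually_map.2 (hsmall.mono fun k hk => by linarith [hgeom k])

theorem tendsto_of_eventually_contracting {Y : Type*} [PseudoMetricSpace Y] {G : ℕ → Y → Y}
    {y : ℕ → Y} {q : Y} {c : ℝ≥0} (hc : c < 1) (hG : ∀ᶠ n in atTop, LipschitzWith c (G n))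
    (hGq : Tendsto (fun n => G n q) atTop (𝓝 q)) (hy : ∀ n, y (n + 1) = G n (y n)) :
    Tendsto y atTop (𝓝 q) := by
  rw [tendsto_iff_dist_tendsto_zero] at hGq ⊢
  refine tendsto_zero_of_le_mul_add c.coe_nonneg hc (fun n => dist_nonneg) hGq ?_
  filter_upwards [hG] with n hn
  calc dist (y (n + 1)) q = dist (G n (y n)) q := by rw [hy]
    _ ≤ dist (G n (y n)) (G n q) + dist (G n q) q := dist_triangle _ _ _
    _ ≤ c * dist (y n) q + dist (G n q) q := by gcongr; exact hn.dist_le_mul _ _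

section SkewProduct

variable {X Y : Type*}

def skewProduct (f : X → X) (g : X → Y → Y) (z : X × Y) : X × Y :=
  (f z.1, g z.1 z.2)

variable (f : X → X) (g : X → Y → Y)

theorem skewProduct_iterate_fst (n : ℕ) (z : X × Y) :
    ((skewProduct f g)^[n] z).1 = f^[n] z.1 := by
  induction n with
  | zero => rfl
  | succ n ih => rw [Function.iterate_succ_apply', Function.iterate_succ_apply', ← ih]; rfl

theorem skewProduct_iterate_succ_snd (z : X × Y) (n : ℕ) :
    ((skewProduct f g)^[n + 1] z).2 = g (f^[n] z.1) ((skewProduct f g)^[n] z).2 := by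
  rw [Function.iterate_succ_apply', ← skewProduct_iterate_fst]
  rfl

end SkewProduct

/-- The condition `limsup_n Lip(g_{fⁿ(x)}) < 1` is phrased as: for each `x` there is a constant
`c < 1` such that eventually `g_{fⁿ(x)}` is `c`-Lipschitz. -/
theorem fiber_contraction_principle_general {X Y : Type*} [TopologicalSpace X]
    [MetricSpace Y]
    (f : X → X) (g : X → Y → Y)
    (F : X × Y → X × Y) (hFdef : ∀ p, F p = (f p.1, g p.1 p.2))
    (hF : Continuous F)
    (p : X) (hp : f p = p)
    (hattr : ∀ x : X, Tendsto (fun n => f^[n] x) atTop (nhds p))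
    (q : Y) (hq : g p q = q)
    (hlip : ∀ x : X, ∃ c : ℝ≥0, c < 1 ∧
      ∀ᶠ n in atTop, LipschitzWith c (g (f^[n] x))) :
    F (p, q) = (p, q) ∧
    ∀ x : X, ∀ y : Y, Tendsto (fun n => F^[n] (x, y)) atTop (nhds (p, q)) := by
  obtain rfl : F = skewProduct f g := funext hFdef
  have hgq : Continuous fun z => g z q := (hF.comp (Continuous.prodMk_left q)).snd
  refine ⟨by rw [hFdef, hp, hq], fun x y => ?_⟩
  obtain ⟨c, hc, hlipx⟩ := hlip x
  have hfst : Tendsto (fun n => ((skewProduct f g)^[n] (x, y)).1) atTop (𝓝 p) := by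
    simpa only [skewProduct_iterate_fst] using hattr x
  have hsnd : Tendsto (fun n => ((skewProduct f g)^[n] (x, y)).2) atTop (𝓝 q) :=
    tendsto_of_eventually_contracting hc hlipx (by simpa only [hq, Function.comp_def] using (hgq.tendsto p).comp (hattr x))
      (skewProduct_iterate_succ_snd f g (x, y))
  exact hfst.prodMk_nhds hsnd

/-- Hirsch–Pugh fiber contraction theorem.  The condition
`limsup_n Lip(g_{fⁿ(x)}) < 1` is phrased as: for each `x` there is a constant
`c < 1` such that eventually `g_{fⁿ(x)}` is `c`-Lipschitz. -/
theorem fiber_contraction_principle {X Y : Type*} [TopologicalSpace X]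
    [MetricSpace Y] [CompleteSpace Y]
    (f : X → X) (hf : Continuous f) (g : X → Y → Y)
    (F : X × Y → X × Y) (hFdef : ∀ p, F p = (f p.1, g p.1 p.2))
    (hF : Continuous F)
    (p : X) (hp : f p = p)
    (hattr : ∀ x : X, Tendsto (fun n => f^[n] x) atTop (nhds p))
    (q : Y) (hq : g p q = q)
    (hlip : ∀ x : X, ∃ c : ℝ≥0, c < 1 ∧
      ∀ᶠ n in atTop, LipschitzWith c (g (f^[n] x))) :
    F (p, q) = (p, q) ∧
    ∀ x : X, ∀ y : Y, Tendsto (fun n => F^[n] (x, y)) atTop (nhds (p, q)) :=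
  fiber_contraction_principle_general f g F hFdef hF p hp hattr q hq hlip
end
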